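/- Let p₁, p₂ > 0 with p₁ + p₂ = 1 and b > 1, and define ρ(b) = lim_{n→∞}(v_n)^{2^{-n}} for the orbit of (1,1) under F(u,v) = (p₁u + p₂v², p₁u + b p₂v²). Then ρ(b) > 1, and the free energy ψ(b) = lim_{n→∞} -(2^{n+1}-1)^{-1} log v_{n+1} exists and equals -log ρ(b). -/

import Mathlib

/-!
Put `w n = b p₂ v n`. Dropping the term `p₁ u n` from the recursion gives `w n ^ 2 ≤ w (n + 1)`, so
`w n ^ 2⁻ⁿ` is nondecreasing; since `(b p₂) ^ 2⁻ⁿ → 1` its limit is `ρ`, and `ρ > 1` as soon as one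
`w n` exceeds `1`. That happens because `v n ≥ 1 + (b - 1) p₂` for `n ≥ 1` and `u n ≤ v n`, which
make `u` grow geometrically. The free energy is `-(1 - 2⁻ⁿ⁻¹)⁻¹ · 2⁻ⁿ⁻¹ log v (n + 1) → -log ρ`.
-/

open Filter Topology Real

noncomputable def orbit (p₁ p₂ b : ℝ) : ℕ → ℝ × ℝ
  | 0 => (1, 1)
  | n + 1 =>
      (p₁ * (orbit p₁ p₂ b n).1 + p₂ * (orbit p₁ p₂ b n).2 ^ 2,
       p₁ * (orbit p₁ p₂ b n).1 + b * p₂ * (orbit p₁ p₂ b n).2 ^ 2)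

section RootsOfDoublyExponential

variable {x : ℕ → ℝ} {ρ : ℝ}

lemma tendsto_mul_rpow_inv_two_pow {c : ℝ} (hc : 0 < c) (hx : ∀ n, 0 ≤ x n)
    (hρ : Tendsto (fun n => x n ^ ((2 : ℝ)⁻¹ ^ n)) atTop (𝓝 ρ)) :
    Tendsto (fun n => (c * x n) ^ ((2 : ℝ)⁻¹ ^ n)) atTop (𝓝 ρ) := by
  have hc_root : Tendsto (fun n : ℕ => c ^ ((2 : ℝ)⁻¹ ^ n)) atTop (𝓝 1) := by
    simpa [Function.comp_def] using (continuousAt_const_rpow hc.ne').tendsto.comp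
      (tendsto_pow_atTop_nhds_zero_of_lt_one (by norm_num : (0 : ℝ) ≤ 2⁻¹) (by norm_num))
  simpa [mul_rpow hc.le (hx _)] using hc_root.mul hρ

lemma monotone_rpow_inv_two_pow_of_sq_le (hx : ∀ n, 0 ≤ x n) (hsq : ∀ n, x n ^ 2 ≤ x (n + 1)) :
    Monotone fun n => x n ^ ((2 : ℝ)⁻¹ ^ n) := by
  refine monotone_nat_of_le_succ fun n => ?_
  calc x n ^ ((2 : ℝ)⁻¹ ^ n) = (x n ^ 2) ^ ((2 : ℝ)⁻¹ ^ (n + 1)) := by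
        rw [← rpow_natCast (x n) 2, ← rpow_mul (hx n)]
        congr 1
        push_cast
        ring
    _ ≤ x (n + 1) ^ ((2 : ℝ)⁻¹ ^ (n + 1)) := rpow_le_rpow (by positivity) (hsq n) (by positivity)

lemma inv_two_pow_sub_one (m : ℕ) :
    ((2 : ℝ) ^ m - 1)⁻¹ = (1 - (2 : ℝ)⁻¹ ^ m)⁻¹ * (2 : ℝ)⁻¹ ^ m := by
  rw [inv_pow, ← mul_inv, sub_mul, inv_mul_cancel₀ (by positivity), one_mul]

lemma tendsto_neg_inv_two_pow_sub_one_mul_log (hx : ∀ n, 0 < x n) (hρ0 : 0 < ρ)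
    (hρ : Tendsto (fun n => x n ^ ((2 : ℝ)⁻¹ ^ n)) atTop (𝓝 ρ)) :
    Tendsto (fun n : ℕ => -(((2 : ℝ) ^ (n + 1) - 1)⁻¹ * log (x (n + 1)))) atTop (𝓝 (-log ρ)) := by
  have hlog : Tendsto (fun n => (2 : ℝ)⁻¹ ^ n * log (x n)) atTop (𝓝 (log ρ)) := by
    simpa [Function.comp_def, log_rpow (hx _)] using
      (continuousAt_log hρ0.ne').tendsto.comp hρ
  have hfactor : Tendsto (fun n : ℕ => (1 - (2 : ℝ)⁻¹ ^ n)⁻¹) atTop (𝓝 1) := by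
    simpa using (tendsto_const_nhds.sub (tendsto_pow_atTop_nhds_zero_of_lt_one
      (by norm_num : (0 : ℝ) ≤ 2⁻¹) (by norm_num))).inv₀ (by norm_num : (1 : ℝ) - 0 ≠ 0)
  have h := ((hfactor.mul hlog).comp (tendsto_add_atTop_nat 1)).neg
  simpa only [one_mul, Function.comp_def, inv_two_pow_sub_one, mul_assoc] using h

end RootsOfDoublyExponential

namespace orbit

variable {p₁ p₂ b : ℝ}

lemma succ_fst (n : ℕ) : (orbit p₁ p₂ b (n + 1)).1 =
    p₁ * (orbit p₁ p₂ b n).1 + p₂ * (orbit p₁ p₂ b n).2 ^ 2 := rfl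

lemma succ_snd (n : ℕ) : (orbit p₁ p₂ b (n + 1)).2 =
    p₁ * (orbit p₁ p₂ b n).1 + b * p₂ * (orbit p₁ p₂ b n).2 ^ 2 := rfl

lemma one_le (hp₁ : 0 ≤ p₁) (hp₂ : 0 ≤ p₂) (hsum : p₁ + p₂ = 1) (hb : 1 ≤ b) (n : ℕ) :
    1 ≤ (orbit p₁ p₂ b n).1 ∧ 1 ≤ (orbit p₁ p₂ b n).2 := by
  induction n with
  | zero => exact ⟨le_rfl, le_rfl⟩
  | succ n ih =>
    obtain ⟨hu, hv⟩ := ih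
    have hv2 : 1 ≤ (orbit p₁ p₂ b n).2 ^ 2 := one_le_pow₀ hv
    have hbv2 : 1 ≤ b * (orbit p₁ p₂ b n).2 ^ 2 := one_le_mul_of_one_le_of_one_le hb hv2
    rw [succ_fst, succ_snd]
    constructor <;> nlinarith [mul_nonneg hp₂ (sub_nonneg.2 hbv2)]

lemma fst_le_snd (hp₂ : 0 ≤ p₂) (hb : 1 ≤ b) (n : ℕ) :
    (orbit p₁ p₂ b n).1 ≤ (orbit p₁ p₂ b n).2 := by
  cases n with
  | zero => exact le_rfl
  | succ n =>
    rw [succ_fst, succ_snd]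
    nlinarith [mul_nonneg (mul_nonneg (sub_nonneg.2 hb) hp₂) (sq_nonneg (orbit p₁ p₂ b n).2)]

lemma one_add_le_succ_snd (hp₁ : 0 ≤ p₁) (hp₂ : 0 ≤ p₂) (hsum : p₁ + p₂ = 1) (hb : 1 ≤ b)
    (n : ℕ) : 1 + (b - 1) * p₂ ≤ (orbit p₁ p₂ b (n + 1)).2 := by
  obtain ⟨hu, hv⟩ := one_le hp₁ hp₂ hsum hb n
  have hv2 : 1 ≤ (orbit p₁ p₂ b n).2 ^ 2 := one_le_pow₀ hv
  rw [succ_snd]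
  nlinarith [mul_nonneg (zero_le_one.trans hb) hp₂]

lemma pow_le_succ_fst (hp₁ : 0 ≤ p₁) (hp₂ : 0 ≤ p₂) (hsum : p₁ + p₂ = 1) (hb : 1 ≤ b) (n : ℕ) :
    (1 + (b - 1) * p₂ ^ 2) ^ n ≤ (orbit p₁ p₂ b (n + 1)).1 := by
  induction n with
  | zero => simpa using (one_le hp₁ hp₂ hsum hb 1).1
  | succ n ih =>
    set u := (orbit p₁ p₂ b (n + 1)).1
    set v := (orbit p₁ p₂ b (n + 1)).2
    have hv : 1 + (b - 1) * p₂ ≤ v := one_add_le_succ_snd hp₁ hp₂ hsum hb n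
    have huv : u ≤ v := fst_le_snd hp₂ hb (n + 1)
    have hu : 0 ≤ u := zero_le_one.trans (one_le hp₁ hp₂ hsum hb (n + 1)).1
    -- `v ^ 2 ≥ (1 + (b - 1) p₂) u`, so one step multiplies `u` by at least `1 + (b - 1) p₂ ^ 2`
    have hgrowth : (1 + (b - 1) * p₂ ^ 2) * u ≤ (orbit p₁ p₂ b (n + 2)).1 := by
      rw [succ_fst]
      nlinarith [mul_le_mul hv huv hu (by linarith), mul_nonneg hp₂ (sub_nonneg.2 hb)]
    calc (1 + (b - 1) * p₂ ^ 2) ^ (n + 1) = (1 + (b - 1) * p₂ ^ 2) * (1 + (b - 1) * p₂ ^ 2) ^ n :=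
          pow_succ' _ _
      _ ≤ (1 + (b - 1) * p₂ ^ 2) * u := by gcongr
      _ ≤ _ := hgrowth

lemma sq_mul_snd_le (hp₁ : 0 ≤ p₁) (hp₂ : 0 ≤ p₂) (hsum : p₁ + p₂ = 1) (hb : 1 ≤ b) (n : ℕ) :
    (b * p₂ * (orbit p₁ p₂ b n).2) ^ 2 ≤ b * p₂ * (orbit p₁ p₂ b (n + 1)).2 := by
  have hu : 0 ≤ (orbit p₁ p₂ b n).1 := zero_le_one.trans (one_le hp₁ hp₂ hsum hb n).1
  have hbp₂ : 0 ≤ b * p₂ := mul_nonneg (zero_le_one.trans hb) hp₂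
  rw [succ_snd]
  nlinarith [mul_nonneg (mul_nonneg hbp₂ hp₁) hu]

lemma exists_one_lt_mul_snd (hp₁ : 0 ≤ p₁) (hp₂ : 0 < p₂) (hsum : p₁ + p₂ = 1) (hb : 1 < b) :
    ∃ n, 1 < b * p₂ * (orbit p₁ p₂ b n).2 := by
  have hbp₂ : 0 < b * p₂ := mul_pos (zero_lt_one.trans hb) hp₂
  obtain ⟨n, hn⟩ := pow_unbounded_of_one_lt (b * p₂)⁻¹
    (lt_add_of_pos_right 1 (mul_pos (sub_pos.2 hb) (pow_pos hp₂ 2)))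
  refine ⟨n + 1, (inv_lt_iff_one_lt_mul₀' hbp₂).1 ?_⟩
  exact hn.trans_le ((pow_le_succ_fst hp₁ hp₂.le hsum hb.le n).trans (fst_le_snd hp₂.le hb.le _))

end orbit

theorem stmt_17 (p₁ p₂ b : ℝ) (h1 : 0 < p₁) (h2 : 0 < p₂) (hsum : p₁ + p₂ = 1)
    (hb : 1 < b) (ρ : ℝ)
    (hρ : Filter.Tendsto (fun n : ℕ => ((orbit p₁ p₂ b n).2) ^ ((2 : ℝ)⁻¹ ^ n))
      Filter.atTop (nhds ρ)) :
    1 < ρ ∧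
    Filter.Tendsto
      (fun n : ℕ => -(((2 : ℝ) ^ (n + 1) - 1)⁻¹ * Real.log ((orbit p₁ p₂ b (n + 1)).2)))
      Filter.atTop (nhds (-Real.log ρ)) := by
  have hv : ∀ n, 1 ≤ (orbit p₁ p₂ b n).2 := fun n => (orbit.one_le h1.le h2.le hsum hb.le n).2
  have hbp₂ : 0 < b * p₂ := mul_pos (zero_lt_one.trans hb) h2
  have hw : ∀ n, 0 ≤ b * p₂ * (orbit p₁ p₂ b n).2 := fun n => by
    have := hv n
    positivity
  have hmono := monotone_rpow_inv_two_pow_of_sq_le hw (orbit.sq_mul_snd_le h1.le h2.le hsum hb.le)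
  have hw_lim := tendsto_mul_rpow_inv_two_pow hbp₂ (fun n => zero_le_one.trans (hv n)) hρ
  obtain ⟨n, hn⟩ := orbit.exists_one_lt_mul_snd h1.le h2 hsum hb
  have hρ1 : 1 < ρ :=
    (one_lt_rpow hn (by positivity)).trans_le (hmono.ge_of_tendsto hw_lim n)
  exact ⟨hρ1, tendsto_neg_inv_two_pow_sub_one_mul_log (fun n => zero_lt_one.trans_le (hv n))
    (zero_lt_one.trans hρ1) hρ⟩
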